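/- arXiv:1711.07631 — 9 statements merged into one kernel-verified Lean document; each statement's English description precedes it below -/
import Mathlib

section
/- Let U : Fin n → Finset (Fin θ) be a fractional repetition code in which every packet has replication factor exactly ρ with ρ ≥ 2, and suppose the simple graph G on Fin n, in which distinct i and i' are adjacent if and only if U i ∩ U i' is nonempty, is connected. Then (ρ − 1) * (∑ i, (U i).card) ≥ ρ * (n − 1). -/
/-!
Double counting node–packet incidences gives `∑ i, |U i| = θ ρ`. Root the connected sharing graph
at a node `v₀`: every other node shares a packet with a neighbour closer to `v₀`, so it is a holder
of that packet other than the holder nearest to `v₀`. Hence `n - 1 ≤ ∑ j, (ρ - 1) = θ (ρ - 1)`,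
and multiplying by `ρ` gives the bound.
-/

open Finset

namespace SimpleGraph

variable {V : Type*} {G : SimpleGraph V}

theorem Reachable.exists_adj_dist_lt {u v : V} (h : G.Reachable v u) (hne : v ≠ u) :
    ∃ w, G.Adj v w ∧ G.dist u w < G.dist u v := by
  obtain ⟨p, hp⟩ := h.exists_walk_length_eq_dist
  cases p with
  | nil => exact absurd rfl hne
  | @cons _ w _ hadj p =>
    refine ⟨w, hadj, ?_⟩
    rw [dist_comm (u := u) (v := w), dist_comm (u := u) (v := v), ← hp, Walk.length_cons]
    exact Nat.lt_succ_of_le (dist_le p)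

end SimpleGraph

theorem Finset.card_filter_exists_lt_le_card_sub_one {α β : Type*} [LinearOrder β]
    (s : Finset α) (f : α → β) : #{a ∈ s | ∃ b ∈ s, f b < f a} ≤ #s - 1 := by
  classical
  rcases s.eq_empty_or_nonempty with rfl | hs
  · simp
  obtain ⟨m, hm, hmin⟩ := s.exists_min_image f hs
  calc #{a ∈ s | ∃ b ∈ s, f b < f a} ≤ #(s.erase m) := by
        refine card_le_card fun a ha => ?_
        obtain ⟨has, b, hb, hlt⟩ := mem_filter.mp ha
        exact mem_erase.mpr ⟨by rintro rfl; exact (hmin b hb).not_gt hlt, has⟩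
    _ = #s - 1 := card_erase_of_mem hm

section SharingGraph

variable {V P : Type*} [Fintype V] [Fintype P] [DecidableEq P]

def sharingGraph (U : V → Finset P) : SimpleGraph V :=
  SimpleGraph.fromRel fun i i' => (U i ∩ U i').Nonempty

def holders (U : V → Finset P) (j : P) : Finset V := {i | j ∈ U i}

theorem sum_card_eq_sum_card_holders (U : V → Finset P) :
    ∑ i, #(U i) = ∑ j, #(holders U j) := by
  simpa [holders, bipartiteAbove, bipartiteBelow] using
    sum_card_bipartiteAbove_eq_sum_card_bipartiteBelow (s := univ) (t := univ)
      (fun i j => j ∈ U i)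

theorem card_sub_one_le_sum_card_holders_sub_one {U : V → Finset P}
    (hconn : (sharingGraph U).Connected) :
    Fintype.card V - 1 ≤ ∑ j, (#(holders U j) - 1) := by
  classical
  set G := sharingGraph U
  obtain ⟨v₀⟩ := hconn.nonempty
  have hcover : univ.erase v₀ ⊆ univ.biUnion fun j =>
      {v ∈ holders U j | ∃ u ∈ holders U j, G.dist v₀ u < G.dist v₀ v} := by
    intro v hv
    obtain ⟨u, hadj, hlt⟩ := (hconn v v₀).exists_adj_dist_lt (ne_of_mem_erase hv)
    obtain ⟨-, hshare | hshare⟩ := SimpleGraph.fromRel_adj _ _ _ |>.mp hadj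
    all_goals
      obtain ⟨j, hj⟩ := hshare
      rw [mem_inter] at hj
      simp only [holders, mem_biUnion, mem_univ, mem_filter, true_and]
    · exact ⟨j, hj.1, u, hj.2, hlt⟩
    · exact ⟨j, hj.2, u, hj.1, hlt⟩
  calc Fintype.card V - 1 = #(univ.erase v₀) := by rw [card_erase_of_mem (mem_univ _), card_univ]
    _ ≤ ∑ j, #{v ∈ holders U j | ∃ u ∈ holders U j, G.dist v₀ u < G.dist v₀ v} :=
      (card_le_card hcover).trans card_biUnion_le
    _ ≤ ∑ j, (#(holders U j) - 1) :=
      sum_le_sum fun j _ => card_filter_exists_lt_le_card_sub_one _ _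

end SharingGraph

theorem fr_connected_sum_storage_bound_general (n θ ρ : ℕ) (U : Fin n → Finset (Fin θ))
    (hρ : ∀ j : Fin θ, (Finset.univ.filter (fun i => j ∈ U i)).card = ρ)
    (hconn : (SimpleGraph.fromRel
        (fun i i' : Fin n => (U i ∩ U i').Nonempty)).Connected) :
    ρ * (n - 1) ≤ (ρ - 1) * ∑ i, (U i).card := by
  have hnodes : n - 1 ≤ θ * (ρ - 1) := by
    simpa [holders, hρ] using card_sub_one_le_sum_card_holders_sub_one (U := U) hconn
  have hsum : ∑ i, (U i).card = θ * ρ := by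
    simp [sum_card_eq_sum_card_holders, holders, hρ]
  calc ρ * (n - 1) ≤ ρ * (θ * (ρ - 1)) := Nat.mul_le_mul_left _ hnodes
    _ = (ρ - 1) * ∑ i, (U i).card := by rw [hsum]; ring

/-- For a connected FR code in which every packet has replication factor exactly
`ρ ≥ 2`, we have `(ρ - 1) * ∑ i, (U i).card ≥ ρ * (n - 1)`. -/
theorem fr_connected_sum_storage_bound (n θ ρ : ℕ) (U : Fin n → Finset (Fin θ))
    (hρ2 : 2 ≤ ρ)
    (hρ : ∀ j : Fin θ, (Finset.univ.filter (fun i => j ∈ U i)).card = ρ)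
    (hconn : (SimpleGraph.fromRel
        (fun i i' : Fin n => (U i ∩ U i').Nonempty)).Connected) :
    ρ * (n - 1) ≤ (ρ - 1) * ∑ i, (U i).card :=
  fr_connected_sum_storage_bound_general n θ ρ U hρ hconn
end

section
/- Let X be a type with decidable equality and let A, B : Fin m → Finset X be two families of finite sets such that for all i, j : Fin m, A i ∩ B j = ∅ if and only if i = j. Then ∑ j, ((((A j).card + (B j).card).choose (A j).card : ℚ))⁻¹ ≤ 1. -/
/-!
Bollobás' induction on the size of the ground set `U = ⋃ⱼ (Aⱼ ∪ Bⱼ)`, with the weight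
`1 / C(a + b, a)` of a pair of sizes `(a, b)`. For `x ∈ U`, the pairs `(Aⱼ, Bⱼ \ {x})`
with `x ∉ Aⱼ` again satisfy the hypothesis, on the smaller ground set `U \ {x}`, so their
weights sum to at most `1`. Summing these `|U|` inequalities over `x` and exchanging the
sums, the pair `(Aᵢ, Bᵢ)` contributes
`(|U| - aᵢ - bᵢ) / C(aᵢ + bᵢ, aᵢ) + bᵢ / C(aᵢ + bᵢ - 1, aᵢ) = |U| / C(aᵢ + bᵢ, aᵢ)`
(using `bᵢ ≥ 1`, which holds once there are two pairs); hence
`|U| ∑ᵢ 1 / C(aᵢ + bᵢ, aᵢ) ≤ |U|`.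
-/

open Finset

def pairWeight (a b : ℕ) : ℚ := ((a + b).choose a : ℚ)⁻¹

lemma pairWeight_le_one (a b : ℕ) : pairWeight a b ≤ 1 :=
  inv_le_one_of_one_le₀ (mod_cast Nat.choose_pos (Nat.le_add_right a b))

lemma succ_mul_pairWeight (a b : ℕ) :
    (b + 1 : ℚ) * pairWeight a b = (a + b + 1) * pairWeight a (b + 1) := by
  have key := Nat.choose_mul_succ_eq (a + b) a
  rw [show a + b + 1 - a = b + 1 by omega] at key
  have h₀ : ((a + b).choose a : ℚ) ≠ 0 := mod_cast (Nat.choose_pos (by omega)).ne'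
  have h₁ : ((a + b + 1).choose a : ℚ) ≠ 0 := mod_cast (Nat.choose_pos (by omega)).ne'
  rw [pairWeight, pairWeight, ← add_assoc]
  field_simp
  rw [mul_comm]
  exact_mod_cast key.symm

lemma sum_pairWeight_le_one_of_card_le_one {ι : Type*} {s : Finset ι} (a b : ι → ℕ)
    (hs : s.card ≤ 1) : ∑ j ∈ s, pairWeight (a j) (b j) ≤ 1 :=
  calc ∑ j ∈ s, pairWeight (a j) (b j) ≤ s.card • (1 : ℚ) :=
        sum_le_card_nsmul _ _ _ fun j _ => pairWeight_le_one _ _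
    _ ≤ 1 := by simpa using hs

lemma sum_pairWeight_erase_eq_card_mul {X : Type*} [DecidableEq X] {U A B : Finset X}
    (hA : A ⊆ U) (hB : B ⊆ U) (hAB : Disjoint A B) (hBne : B.Nonempty) :
    ∑ x ∈ U \ A, pairWeight A.card (B.erase x).card = U.card * pairWeight A.card B.card := by
  obtain ⟨b, hb⟩ : ∃ b, B.card = b + 1 := Nat.exists_eq_succ_of_ne_zero hBne.card_pos.ne'
  have hBU : B ⊆ U \ A := subset_sdiff.mpr ⟨hB, hAB.symm⟩
  have hcard : ((U \ A) \ B).card + B.card + A.card = U.card := by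
    rw [card_sdiff_add_card_eq_card hBU, card_sdiff_add_card_eq_card hA]
  have outside : ∀ x ∈ (U \ A) \ B,
      pairWeight A.card (B.erase x).card = pairWeight A.card (b + 1) := by
    intro x hx
    rw [erase_eq_of_notMem (mem_sdiff.mp hx).2, hb]
  have inside : ∀ x ∈ B, pairWeight A.card (B.erase x).card = pairWeight A.card b := by
    intro x hx
    rw [card_erase_of_mem hx, hb, Nat.add_sub_cancel]
  rw [← sum_sdiff hBU, sum_congr rfl outside, sum_congr rfl inside, sum_const, sum_const,
    nsmul_eq_mul, nsmul_eq_mul, hb, Nat.cast_add_one, succ_mul_pairWeight, ← hcard, hb]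
  push_cast
  ring

section

variable {X ι : Type*} [DecidableEq X]

def groundSet (s : Finset ι) (A B : ι → Finset X) : Finset X :=
  s.biUnion fun j => A j ∪ B j

lemma left_subset_groundSet {s : Finset ι} (A B : ι → Finset X) {i : ι} (hi : i ∈ s) :
    A i ⊆ groundSet s A B :=
  subset_union_left.trans (subset_biUnion_of_mem (fun j => A j ∪ B j) hi)

lemma right_subset_groundSet {s : Finset ι} (A B : ι → Finset X) {i : ι} (hi : i ∈ s) :
    B i ⊆ groundSet s A B :=
  subset_union_right.trans (subset_biUnion_of_mem (fun j => A j ∪ B j) hi)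

lemma groundSet_filter_erase_subset (s : Finset ι) (A B : ι → Finset X) (x : X) :
    groundSet (s.filter (x ∉ A ·)) A (fun j => (B j).erase x) ⊆ (groundSet s A B).erase x := by
  intro y
  simp only [groundSet, mem_biUnion, mem_filter, mem_union, mem_erase]
  grind

end

def IsSetPairSystem {X ι : Type*} (s : Finset ι) (A B : ι → Finset X) : Prop :=
  ∀ i ∈ s, ∀ j ∈ s, Disjoint (A i) (B j) ↔ i = j

namespace IsSetPairSystem

variable {X ι : Type*} {s : Finset ι} {A B : ι → Finset X}

lemma nonempty_right (hs : IsSetPairSystem s A B) (hcard : 1 < s.card) {i : ι} (hi : i ∈ s) :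
    (B i).Nonempty := by
  rw [nonempty_iff_ne_empty]
  intro hBi
  refine hcard.not_ge (card_le_one.mpr fun j hj k hk => ?_)
  have hj_eq : j = i := (hs j hj i hi).mp (by simp [hBi])
  have hk_eq : k = i := (hs k hk i hi).mp (by simp [hBi])
  rw [hj_eq, hk_eq]

variable [DecidableEq X]

lemma filter_erase (hs : IsSetPairSystem s A B) (x : X) :
    IsSetPairSystem (s.filter (x ∉ A ·)) A (fun j => (B j).erase x) := by
  intro i hi j hj
  rw [mem_filter] at hi hj
  rw [← hs i hi.1 j hj.1]
  exact ⟨disjoint_of_erase_right hi.2, fun h => h.mono_right (erase_subset _ _)⟩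

lemma card_groundSet_mul_sum_pairWeight (hs : IsSetPairSystem s A B) (hcard : 1 < s.card) :
    ((groundSet s A B).card : ℚ) * ∑ i ∈ s, pairWeight (A i).card (B i).card =
      ∑ x ∈ groundSet s A B, ∑ i ∈ s.filter (x ∉ A ·),
        pairWeight (A i).card ((B i).erase x).card := by
  calc _ = ∑ i ∈ s, ∑ x ∈ groundSet s A B \ A i, pairWeight (A i).card ((B i).erase x).card := by
        rw [mul_sum]
        refine sum_congr rfl fun i hi => (sum_pairWeight_erase_eq_card_mul ?_ ?_ ?_ ?_).symm
        · exact left_subset_groundSet A B hi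
        · exact right_subset_groundSet A B hi
        · exact (hs i hi i hi).mpr rfl
        · exact hs.nonempty_right hcard hi
    _ = _ := sum_comm' fun i x => by simp only [mem_sdiff, mem_filter]; tauto

theorem sum_pairWeight_le_one (hs : IsSetPairSystem s A B) :
    ∑ j ∈ s, pairWeight (A j).card (B j).card ≤ 1 := by
  induction hn : (groundSet s A B).card using Nat.strong_induction_on generalizing s B with
  | _ n ih =>
  rcases le_or_gt s.card 1 with hs1 | hs1
  · exact sum_pairWeight_le_one_of_card_le_one _ _ hs1
  set U := groundSet s A B
  have hU : 0 < U.card := by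
    obtain ⟨i, hi⟩ := card_pos.mp (zero_lt_one.trans hs1)
    exact ((hs.nonempty_right hs1 hi).mono (right_subset_groundSet A B hi)).card_pos
  have slice : ∀ x ∈ U,
      ∑ i ∈ s.filter (x ∉ A ·), pairWeight (A i).card ((B i).erase x).card ≤ 1 := by
    intro x hx
    refine ih _ ?_ (hs.filter_erase x) rfl
    calc _ ≤ (U.erase x).card := card_le_card (groundSet_filter_erase_subset s A B x)
      _ < n := hn ▸ card_erase_lt_of_mem hx
  have hdouble : (U.card : ℚ) * ∑ i ∈ s, pairWeight (A i).card (B i).card ≤ U.card * 1 :=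
    calc (U.card : ℚ) * ∑ i ∈ s, pairWeight (A i).card (B i).card
        = ∑ x ∈ U, ∑ i ∈ s.filter (x ∉ A ·), pairWeight (A i).card ((B i).erase x).card :=
          hs.card_groundSet_mul_sum_pairWeight hs1
      _ ≤ ∑ x ∈ U, (1 : ℚ) := sum_le_sum slice
      _ = U.card * 1 := by simp
  exact le_of_mul_le_mul_left hdouble (mod_cast hU)

end IsSetPairSystem

/-- Bollobás-type set-pair inequality: if `A i ∩ B j = ∅ ↔ i = j`, then
`∑ j, 1 / C(|A j| + |B j|, |A j|) ≤ 1`. -/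
theorem setPair_inequality {X : Type*} [DecidableEq X] (m : ℕ)
    (A B : Fin m → Finset X)
    (h : ∀ i j : Fin m, A i ∩ B j = ∅ ↔ i = j) :
    ∑ j, ((((A j).card + (B j).card).choose (A j).card : ℚ))⁻¹ ≤ 1 :=
  IsSetPairSystem.sum_pairWeight_le_one fun i _ j _ =>
    disjoint_iff_inter_eq_empty.trans (h i j)
end

section
/- Let U : Fin n → Finset (Fin θ) be a fractional repetition code such that (U i ∩ U i').card ≤ 1 for all distinct i, i' : Fin n. Then ∑ i : Fin n, ((U i).card).choose 2 ≤ θ.choose 2. -/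
/-! Every node `i` contributes the `C(α_i, 2)` pairs of packets it stores. Two distinct nodes
share at most one packet, hence no pair, so these sets of pairs are disjoint subsets of the
`C(θ, 2)` pairs of packets. -/

open Finset

namespace Finset

variable {α : Type*} [DecidableEq α]

theorem disjoint_powersetCard_of_card_inter_lt {s t : Finset α} {k : ℕ} (h : #(s ∩ t) < k) :
    Disjoint (s.powersetCard k) (t.powersetCard k) := by
  refine disjoint_left.2 fun u hus hut => ?_
  rw [mem_powersetCard] at hus hut
  have := card_le_card (subset_inter hus.1 hut.1)
  omega

theorem sum_card_choose_le_of_pairwise_card_inter_lt {ι : Type*} [Fintype α]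
    (s : Finset ι) (U : ι → Finset α) {k : ℕ}
    (h : (s : Set ι).Pairwise fun i j => #(U i ∩ U j) < k) :
    ∑ i ∈ s, (#(U i)).choose k ≤ (Fintype.card α).choose k :=
  calc ∑ i ∈ s, (#(U i)).choose k
      = #(s.biUnion fun i => (U i).powersetCard k) := by
        rw [card_biUnion fun i hi j hj hij => disjoint_powersetCard_of_card_inter_lt (h hi hj hij)]
        simp only [card_powersetCard]
    _ ≤ #((univ : Finset α).powersetCard k) :=
        card_le_card <| biUnion_subset.2 fun i _ => powersetCard_mono (subset_univ _)
    _ = (Fintype.card α).choose k := by rw [card_powersetCard, card_univ]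

end Finset

/-- For a universally good FR code (any two distinct nodes share at most
one packet), `∑ i, C(α_i, 2) ≤ C(θ, 2)`. -/
theorem fr_universally_good_storage_bound (n θ : ℕ)
    (U : Fin n → Finset (Fin θ))
    (h : ∀ i i' : Fin n, i ≠ i' → (U i ∩ U i').card ≤ 1) :
    ∑ i : Fin n, ((U i).card).choose 2 ≤ θ.choose 2 := by
  simpa using sum_card_choose_le_of_pairwise_card_inter_lt univ U
    fun i _ j _ hij => Nat.lt_succ_of_le (h i j hij)
end

section
/- Let U : Fin n → Finset (Fin θ) be a fractional repetition code such that (U i ∩ U i').card ≤ 1 for all distinct i, i' : Fin n, and suppose every packet has replication factor exactly ρ, i.e. for every j : Fin θ the number of indices i with j ∈ U i equals ρ. Then θ * (ρ * (ρ − 1)) ≤ n * (n − 1). -/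
/-!
Count the triples `(i, i', j)` with `i ≠ i'` and packet `j` stored on both nodes `i` and `i'`.
Grouped by packet, there are `ρ_j (ρ_j - 1)` of them for each `j`; grouped by the ordered pair
of nodes, there are `#(U i ∩ U i') ≤ 1` for each of the `n (n - 1)` pairs.
-/

open Finset

section LinearFamily

variable {ι α : Type*} [Fintype ι] [Fintype α] [DecidableEq α]

theorem sum_card_inter_offDiag_eq_sum_card_offDiag (U : ι → Finset α) :
    ∑ p ∈ (univ : Finset ι).offDiag, #(U p.1 ∩ U p.2) =
      ∑ j, #({i | j ∈ U i} : Finset ι).offDiag := by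
  let stores (p : ι × ι) (j : α) : Prop := j ∈ U p.1 ∧ j ∈ U p.2
  calc ∑ p ∈ (univ : Finset ι).offDiag, #(U p.1 ∩ U p.2)
      = ∑ p ∈ (univ : Finset ι).offDiag, #(univ.bipartiteAbove stores p) := by
        refine sum_congr rfl fun p _ => congrArg card ?_
        ext j
        simp [stores, bipartiteAbove]
    _ = ∑ j, #((univ : Finset ι).offDiag.bipartiteBelow stores j) :=
        sum_card_bipartiteAbove_eq_sum_card_bipartiteBelow stores
    _ = ∑ j, #({i | j ∈ U i} : Finset ι).offDiag := by
        refine sum_congr rfl fun j _ => congrArg card ?_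
        ext p
        simp only [stores, bipartiteBelow, mem_filter, mem_offDiag, mem_univ, true_and]
        tauto

theorem sum_card_mul_card_sub_one_le_of_card_inter_le_one (U : ι → Finset α)
    (h : ∀ i i', i ≠ i' → #(U i ∩ U i') ≤ 1) :
    ∑ j, #({i | j ∈ U i} : Finset ι) * (#({i | j ∈ U i} : Finset ι) - 1) ≤
      Fintype.card ι * (Fintype.card ι - 1) := by
  calc ∑ j, #({i | j ∈ U i} : Finset ι) * (#({i | j ∈ U i} : Finset ι) - 1)
      = ∑ p ∈ (univ : Finset ι).offDiag, #(U p.1 ∩ U p.2) := by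
        simp only [sum_card_inter_offDiag_eq_sum_card_offDiag, offDiag_card, Nat.mul_sub_one]
    _ ≤ ∑ p ∈ (univ : Finset ι).offDiag, 1 :=
        sum_le_sum fun p hp => h p.1 p.2 (mem_offDiag.mp hp).2.2
    _ = Fintype.card ι * (Fintype.card ι - 1) := by
        rw [sum_const, smul_eq_mul, mul_one, offDiag_card, card_univ, Nat.mul_sub_one]

end LinearFamily

/-- For a universally good FR code with uniform packet replication factor `ρ`,
`θ * ρ * (ρ - 1) ≤ n * (n - 1)`. -/
theorem fr_universally_good_uniform_replication (n θ ρ : ℕ)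
    (U : Fin n → Finset (Fin θ))
    (h : ∀ i i' : Fin n, i ≠ i' → (U i ∩ U i').card ≤ 1)
    (hρ : ∀ j : Fin θ, (Finset.univ.filter (fun i => j ∈ U i)).card = ρ) :
    θ * (ρ * (ρ - 1)) ≤ n * (n - 1) := by
  simpa [hρ] using sum_card_mul_card_sub_one_le_of_card_inter_le_one U h
end

section
/- Let U : Fin n → Finset (Fin θ) be a fractional repetition code such that (U i ∩ U i').card ≤ 1 for all distinct i, i' : Fin n. Then ∑ i, (U i).card ≤ θ + n.choose 2. -/
/-! Count incidences through the points: if `d e` sets contain the point `e`, then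
`∑ i, #(U i) = ∑ e, d e`. Every pair of sets shares at most one point, so the pairs of sets
through the various points are distinct and `∑ e, (d e).choose 2 ≤ n.choose 2`. Combined with
`d ≤ d.choose 2 + 1` this gives the bound. -/

open Finset Function

theorem Nat.le_choose_two_add_one : ∀ d : ℕ, d ≤ d.choose 2 + 1
  | 0 => by simp
  | d + 1 => by rw [Nat.choose_succ_succ', Nat.choose_one_right]; omega

section LinearFamily

variable {ι α : Type*} [Fintype ι] [DecidableEq α]

theorem sum_card_eq_sum_card_filter_mem [Fintype α] (U : ι → Finset α) :
    ∑ i, #(U i) = ∑ e, #{i | e ∈ U i} := by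
  simpa [bipartiteAbove, bipartiteBelow] using
    sum_card_bipartiteAbove_eq_sum_card_bipartiteBelow (s := univ) (t := univ)
      (fun i e => e ∈ U i)

theorem pairwise_disjoint_powersetCard_two_filter_mem [DecidableEq ι] {U : ι → Finset α}
    (h : Pairwise fun i i' => #(U i ∩ U i') ≤ 1) :
    Pairwise (Disjoint on fun e => powersetCard 2 {i | e ∈ U i}) := by
  intro e e' hne
  refine disjoint_left.2 fun P hP hP' => hne ?_
  obtain ⟨hPe, hcard⟩ := mem_powersetCard.1 hP
  obtain ⟨i, i', hii', rfl⟩ := card_eq_two.1 hcard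
  have hPe' := (mem_powersetCard.1 hP').1
  simp only [insert_subset_iff, singleton_subset_iff, mem_filter_univ] at hPe hPe'
  exact card_le_one.1 (h hii') e (mem_inter.2 hPe) e' (mem_inter.2 hPe')

theorem sum_choose_two_card_filter_mem_le [Fintype α] [DecidableEq ι] {U : ι → Finset α}
    (h : Pairwise fun i i' => #(U i ∩ U i') ≤ 1) :
    ∑ e, (#{i | e ∈ U i}).choose 2 ≤ (Fintype.card ι).choose 2 :=
  calc ∑ e, (#{i | e ∈ U i}).choose 2 = ∑ e, #(powersetCard 2 {i | e ∈ U i}) := by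
        simp only [card_powersetCard]
    _ = #(univ.biUnion fun e => powersetCard 2 {i | e ∈ U i}) :=
        (card_biUnion ((pairwise_disjoint_powersetCard_two_filter_mem h).set_pairwise _)).symm
    _ ≤ #(powersetCard 2 (univ : Finset ι)) :=
        card_le_card (biUnion_subset.2 fun _ _ => powersetCard_mono (subset_univ _))
    _ = (Fintype.card ι).choose 2 := by rw [card_powersetCard, card_univ]

theorem sum_card_le_card_add_choose_two [Fintype α] [DecidableEq ι] {U : ι → Finset α}
    (h : Pairwise fun i i' => #(U i ∩ U i') ≤ 1) :
    ∑ i, #(U i) ≤ Fintype.card α + (Fintype.card ι).choose 2 :=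
  calc ∑ i, #(U i) = ∑ e, #{i | e ∈ U i} := sum_card_eq_sum_card_filter_mem U
    _ ≤ ∑ e, ((#{i | e ∈ U i}).choose 2 + 1) :=
        sum_le_sum fun e _ => Nat.le_choose_two_add_one _
    _ = ∑ e, (#{i | e ∈ U i}).choose 2 + Fintype.card α := by
        rw [sum_add_distrib, sum_const, smul_eq_mul, mul_one, card_univ]
    _ ≤ Fintype.card α + (Fintype.card ι).choose 2 := by
        have := sum_choose_two_card_filter_mem_le h
        omega

end LinearFamily

/-- For a universally good FR code (linear hypergraph),
`∑ i, α_i ≤ θ + C(n, 2)`, i.e. `|𝓔| ≥ ∑ deg(v) - C(|V|, 2)`. -/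
theorem fr_universally_good_total_storage (n θ : ℕ)
    (U : Fin n → Finset (Fin θ))
    (h : ∀ i i' : Fin n, i ≠ i' → (U i ∩ U i').card ≤ 1) :
    ∑ i, (U i).card ≤ θ + n.choose 2 := by
  simpa using sum_card_le_card_add_choose_two (U := U) h
end

section
/- Let U : Fin n → Finset (Fin θ) be a fractional repetition code such that (U i ∩ U i').card ≤ 1 for all distinct i, i' : Fin n. Then for every finite set S : Finset (Fin n), ∑ i in S, (U i).card ≤ (S.biUnion U).card + (S.card).choose 2. -/
/-! Adding the nodes one at a time, a new node `i` shares at most one packet with each node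
already present, so it contributes at least `α_i - |T|` new packets when `|T|` nodes are
present; summing these losses gives `0 + 1 + ⋯ + (|S| - 1) = C(|S|, 2)`. -/

namespace Finset

variable {ι α : Type*} [DecidableEq α]

theorem card_inter_biUnion_le (s : Finset α) (T : Finset ι) (U : ι → Finset α) :
    #(s ∩ T.biUnion U) ≤ ∑ j ∈ T, #(s ∩ U j) := by
  rw [inter_biUnion]
  exact card_biUnion_le

theorem sum_card_le_card_biUnion_add_choose_two [DecidableEq ι] (U : ι → Finset α)
    (S : Finset ι) (hU : ∀ i ∈ S, ∀ j ∈ S, i ≠ j → #(U i ∩ U j) ≤ 1) :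
    ∑ i ∈ S, #(U i) ≤ #(S.biUnion U) + (#S).choose 2 := by
  induction S using Finset.induction_on with
  | empty => simp
  | @insert i T hiT ih =>
    have hT : ∀ j ∈ T, ∀ k ∈ T, j ≠ k → #(U j ∩ U k) ≤ 1 := fun j hj k hk =>
      hU j (mem_insert_of_mem hj) k (mem_insert_of_mem hk)
    have hoverlap : #(U i ∩ T.biUnion U) ≤ #T :=
      calc #(U i ∩ T.biUnion U) ≤ ∑ j ∈ T, #(U i ∩ U j) := card_inter_biUnion_le _ _ _
        _ ≤ ∑ _j ∈ T, 1 := sum_le_sum fun j hj =>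
            hU i (mem_insert_self i T) j (mem_insert_of_mem hj) (ne_of_mem_of_not_mem hj hiT).symm
        _ = #T := by rw [sum_const, smul_eq_mul, mul_one]
    have hunion := card_union_add_card_inter (U i) (T.biUnion U)
    rw [sum_insert hiT, biUnion_insert, card_insert_of_notMem hiT, Nat.choose_succ_succ',
      Nat.choose_one_right]
    linarith [ih hT]

end Finset

/-- For a universally good FR code (linear hypergraph), every set `S` of nodes
stores at least `∑_{i ∈ S} α_i - C(|S|, 2)` distinct packets. -/
theorem fr_universally_good_file_size (n θ : ℕ)
    (U : Fin n → Finset (Fin θ))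
    (h : ∀ i i' : Fin n, i ≠ i' → (U i ∩ U i').card ≤ 1)
    (S : Finset (Fin n)) :
    ∑ i ∈ S, (U i).card ≤ (S.biUnion U).card + (S.card).choose 2 :=
  Finset.sum_card_le_card_biUnion_add_choose_two U S fun i _ j _ => h i j
end

section
/- Let U : Fin n → Finset (Fin θ) be a fractional repetition code such that (U i ∩ U i').card ≤ 1 for all distinct i, i' : Fin n, suppose the storage capacities are sorted nondecreasingly, i.e. (U i).card ≤ (U i').card whenever i ≤ i', and let k ≤ n. Then for every S : Finset (Fin n) with S.card = k, (S.biUnion U).card + (k.choose 2) ≥ ∑ i in (Finset.univ.filter (fun i : Fin n => (i : ℕ) < k)), (U i).card. In other words, the minimum over all k-element node sets S of the number of distinct packets stored on S is at least the sum of the k smallest storage capacities minus C(k,2). -/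
/-!
Adding the nodes of `S` one at a time, the `j`-th node meets the packets already collected in at
most `j` packets, since it shares at most one packet with each earlier node; hence
`∑_{i ∈ S} α_i ≤ |⋃_{i ∈ S} U i| + C(k, 2)`. For sorted capacities, the `j`-th smallest index of
`S` is at least `j`, so `∑_{i ∈ S} α_i` dominates the sum of the `k` smallest capacities.
-/

open Finset

theorem card_inter_biUnion_le_card {ι α : Type*} [DecidableEq α] {U : ι → Finset α} {a : ι}
    {S : Finset ι} (hU : ∀ i ∈ S, #(U a ∩ U i) ≤ 1) : #(U a ∩ S.biUnion U) ≤ #S := by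
  rw [inter_biUnion]
  exact card_biUnion_le.trans (card_eq_sum_ones S ▸ sum_le_sum hU)

theorem sum_card_le_card_biUnion_add_choose_two {ι α : Type*} [DecidableEq ι] [DecidableEq α]
    {U : ι → Finset α} {S : Finset ι} (hU : (S : Set ι).Pairwise fun i j => #(U i ∩ U j) ≤ 1) :
    ∑ i ∈ S, #(U i) ≤ #(S.biUnion U) + (#S).choose 2 := by
  induction S using Finset.induction_on with
  | empty => simp
  | @insert a S ha ih =>
    rw [coe_insert, Set.pairwise_insert] at hU
    have hinter : #(U a ∩ S.biUnion U) ≤ #S :=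
      card_inter_biUnion_le_card fun i hi => (hU.2 i hi fun h => ha (h ▸ hi)).1
    have hunion := card_union_add_card_inter (U a) (S.biUnion U)
    have hchoose : (#S + 1).choose 2 = (#S).choose 2 + #S := by
      simp [Nat.choose_succ_succ, add_comm]
    have := ih hU.1
    rw [sum_insert ha, biUnion_insert, card_insert_of_notMem ha, hchoose]
    omega

theorem Fin.val_le_of_strictMono {k n : ℕ} {f : Fin k → Fin n} (hf : StrictMono f) (j : Fin k) :
    (j : ℕ) ≤ f j := by
  obtain ⟨j, hj⟩ := j
  induction j with
  | zero => exact Nat.zero_le _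
  | succ j ih => exact (ih (by omega)).trans_lt (hf (Fin.mk_lt_mk.2 j.lt_succ_self))

theorem Fin.map_castLEEmb_univ {k n : ℕ} (hk : k ≤ n) :
    univ.map (Fin.castLEEmb hk) = univ.filter (fun i : Fin n => (i : ℕ) < k) := by
  ext i
  simp only [mem_map, mem_univ, true_and, mem_filter]
  exact ⟨fun ⟨j, hj⟩ => hj ▸ j.2, fun hi => ⟨⟨i, hi⟩, rfl⟩⟩

theorem sum_filter_val_lt_le_sum_of_monotone {n k : ℕ} {M : Type*} [AddCommMonoid M]
    [PartialOrder M] [IsOrderedAddMonoid M] {f : Fin n → M} (hf : Monotone f)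
    {S : Finset (Fin n)} (hS : #S = k) :
    ∑ i ∈ univ.filter (fun i : Fin n => (i : ℕ) < k), f i ≤ ∑ i ∈ S, f i := by
  have hk : k ≤ n := hS ▸ card_le_univ S |>.trans_eq (Fintype.card_fin n)
  rw [← Fin.map_castLEEmb_univ hk, sum_map, ← S.map_orderEmbOfFin_univ hS, sum_map]
  exact sum_le_sum fun j _ => hf (Fin.val_le_of_strictMono (S.orderEmbOfFin hS).strictMono j)

theorem fr_universally_good_sorted_file_size_general (n θ k : ℕ)
    (U : Fin n → Finset (Fin θ))
    (h : ∀ i i' : Fin n, i ≠ i' → (U i ∩ U i').card ≤ 1)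
    (hsorted : ∀ i i' : Fin n, i ≤ i' → (U i).card ≤ (U i').card)
    (S : Finset (Fin n)) (hS : S.card = k) :
    ∑ i ∈ (Finset.univ.filter (fun i : Fin n => (i : ℕ) < k)), (U i).card
      ≤ (S.biUnion U).card + k.choose 2 :=
  calc _ ≤ ∑ i ∈ S, #(U i) := sum_filter_val_lt_le_sum_of_monotone hsorted hS
    _ ≤ _ := hS ▸ sum_card_le_card_biUnion_add_choose_two fun i _ j _ hij => h i j hij

/-- For a universally good FR code with nondecreasingly sorted storage
capacities, every `k`-element node set stores at least
`∑_{i < k} α_i - C(k, 2)` distinct packets, i.e.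
`M(k) ≥ ∑ (k smallest α_i) - C(k, 2)`. -/
theorem fr_universally_good_sorted_file_size (n θ k : ℕ)
    (U : Fin n → Finset (Fin θ))
    (h : ∀ i i' : Fin n, i ≠ i' → (U i ∩ U i').card ≤ 1)
    (hsorted : ∀ i i' : Fin n, i ≤ i' → (U i).card ≤ (U i').card)
    (hk : k ≤ n)
    (S : Finset (Fin n)) (hS : S.card = k) :
    ∑ i ∈ (Finset.univ.filter (fun i : Fin n => (i : ℕ) < k)), (U i).card
      ≤ (S.biUnion U).card + k.choose 2 :=
  fr_universally_good_sorted_file_size_general n θ k U h hsorted S hS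
end

section
/- Let α : Fin n → ℕ be nonincreasing (α i ≥ α i' whenever i ≤ i') and let ρ : Fin θ → ℕ. Suppose (1) ∑ j, ρ j = ∑ i, α i, and (2) for every natural number m ≤ n, ∑ j, min (ρ j) m ≥ ∑ i in (Finset.univ.filter (fun i : Fin n => (i : ℕ) < m)), α i. Then there exists a fractional repetition code U : Fin n → Finset (Fin θ) such that (U i).card = α i for every i and, for every j, the number of indices i with j ∈ U i equals ρ j. -/
/-! Greedy construction: node `0` stores the `α 0` packets of largest replication factor
(all of them must still need a copy, by the condition at `m = 1`). Removing node `0` and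
decreasing the replication factors of these packets by one preserves the hypotheses: for a
given `m`, either every chosen packet has replication factor above `m`, so the truncated sums
`∑ j, min (ρ j) m` do not change, or some chosen packet has replication factor at most `m`, so
every unchosen packet does too, and the condition at `m + 1` for the old data gives the
condition at `m` for the new. Induction on the number of nodes finishes the proof. -/

open Finset

theorem exists_card_eq_forall_le {ι β : Type*} [Fintype ι] [DecidableEq ι] [LinearOrder β]
    (f : ι → β) {a : ℕ} (ha : a ≤ Fintype.card ι) :
    ∃ S : Finset ι, #S = a ∧ ∀ j ∈ S, ∀ j' ∉ S, f j' ≤ f j := by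
  induction a with
  | zero => exact ⟨∅, rfl, by simp⟩
  | succ a ih =>
    obtain ⟨S, hcard, htop⟩ := ih (by omega)
    have hne : Sᶜ.Nonempty := by
      rw [← card_pos, card_compl, hcard]
      omega
    obtain ⟨x, hx, hxmax⟩ := exists_max_image Sᶜ f hne
    rw [mem_compl] at hx
    refine ⟨insert x S, by rw [card_insert_of_notMem hx, hcard], fun j hj j' hj' => ?_⟩
    rw [mem_insert, not_or] at hj'
    rcases mem_insert.mp hj with rfl | hjS
    · exact hxmax j' (mem_compl.mpr hj'.2)
    · exact htop j hjS j' hj'.2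

theorem lt_of_mem_of_card_le {ι β : Type*} [Fintype ι] [DecidableEq ι] [LinearOrder β]
    {f : ι → β} {S : Finset ι} (htop : ∀ j ∈ S, ∀ j' ∉ S, f j' ≤ f j) {t : β}
    (hcard : #S ≤ #{j | t < f j}) :
    ∀ j ∈ S, t < f j := by
  intro j₀ hj₀
  by_contra! hj₀t
  have hsub : ({j | t < f j} : Finset ι) ⊆ S.erase j₀ := by
    intro j hj
    rw [mem_filter] at hj
    refine mem_erase.mpr ⟨?_, ?_⟩
    · rintro rfl
      exact (hj.2.trans_le hj₀t).false
    · by_contra hjS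
      exact (hj.2.trans_le ((htop j₀ hj₀ j hjS).trans hj₀t)).false
  have hlt := card_le_card hsub
  rw [card_erase_of_mem hj₀] at hlt
  have hS := card_pos.mpr ⟨j₀, hj₀⟩
  omega

theorem sum_min_one {ι : Type*} [Fintype ι] (ρ : ι → ℕ) :
    ∑ j, min (ρ j) 1 = #{j | 0 < ρ j} := by
  rw [card_filter]
  refine sum_congr rfl fun j _ => ?_
  split_ifs <;> omega

def prefixSum {n : ℕ} (α : Fin n → ℕ) (m : ℕ) : ℕ :=
  ∑ i ∈ univ.filter (fun i : Fin n => (i : ℕ) < m), α i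

theorem prefixSum_succ {n : ℕ} (α : Fin (n + 1) → ℕ) (m : ℕ) :
    prefixSum α (m + 1) = α 0 + prefixSum (Fin.tail α) m := by
  simp [prefixSum, sum_filter, Fin.sum_univ_succ, Fin.tail]

theorem prefixSum_tail_le {n : ℕ} {α : Fin (n + 1) → ℕ} (hα : Antitone α) (m : ℕ) :
    prefixSum (Fin.tail α) m ≤ prefixSum α m := by
  rw [prefixSum, prefixSum, sum_filter, sum_filter, Fin.sum_univ_castSucc]
  refine le_add_right (sum_le_sum fun i _ => ?_)
  simp only [Fin.val_castSucc]
  split_ifs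
  · exact hα Fin.castSucc_lt_succ.le
  · rfl

def IsFRCode {ι : Type*} [DecidableEq ι] {n : ℕ} (U : Fin n → Finset ι) (α : Fin n → ℕ)
    (ρ : ι → ℕ) : Prop :=
  (∀ i, #(U i) = α i) ∧ ∀ j, #{i | j ∈ U i} = ρ j

theorem IsFRCode.cons {ι : Type*} [DecidableEq ι] {n : ℕ} {U : Fin n → Finset ι}
    {α : Fin n → ℕ} {ρ' ρ : ι → ℕ} (hU : IsFRCode U α ρ') (S : Finset ι)
    (hρ : ∀ j, ρ j = (if j ∈ S then 1 else 0) + ρ' j) :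
    IsFRCode (Fin.cons S U : Fin (n + 1) → Finset ι) (Fin.cons #S α) ρ := by
  refine ⟨fun i => ?_, fun j => ?_⟩
  · cases i using Fin.cases <;> simp [hU.1]
  · rw [card_filter, Fin.sum_univ_succ]
    simp only [Fin.cons_zero, Fin.cons_succ]
    rw [← card_filter, hU.2 j, hρ]

theorem prefixSum_tail_le_sum_min {ι : Type*} [Fintype ι] [DecidableEq ι] {n : ℕ}
    {α : Fin (n + 1) → ℕ} (hα : Antitone α) {ρ ρ' : ι → ℕ} {S : Finset ι}
    (htop : ∀ j ∈ S, ∀ j' ∉ S, ρ j' ≤ ρ j) (hcard : #S = α 0)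
    (hρ : ∀ j, ρ j = (if j ∈ S then 1 else 0) + ρ' j)
    (hdom : ∀ m ≤ n + 1, prefixSum α m ≤ ∑ j, min (ρ j) m) (m : ℕ) (hm : m ≤ n) :
    prefixSum (Fin.tail α) m ≤ ∑ j, min (ρ' j) m := by
  by_cases hsmall : ∃ j₀ ∈ S, ρ j₀ ≤ m
  · obtain ⟨j₀, hj₀S, hj₀⟩ := hsmall
    have hpt : ∀ j, min (ρ j) (m + 1) ≤ min (ρ' j) m + if j ∈ S then 1 else 0 := by
      intro j
      have hρj := hρ j
      by_cases hj : j ∈ S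
      · simp only [hj, if_true] at hρj ⊢
        omega
      · have := htop j₀ hj₀S j hj
        simp only [hj, if_false] at hρj ⊢
        omega
    have hsum : ∑ j, min (ρ j) (m + 1) ≤ ∑ j, min (ρ' j) m + #S :=
      calc ∑ j, min (ρ j) (m + 1) ≤ ∑ j, (min (ρ' j) m + if j ∈ S then 1 else 0) :=
            sum_le_sum fun j _ => hpt j
        _ = ∑ j, min (ρ' j) m + #S := by simp [sum_add_distrib]
    have := hdom (m + 1) (by omega)
    rw [prefixSum_succ] at this
    omega
  · push Not at hsmall
    have hpt : ∀ j, min (ρ j) m = min (ρ' j) m := by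
      intro j
      have hρj := hρ j
      by_cases hj : j ∈ S
      · have := hsmall j hj
        simp only [hj, if_true] at hρj
        omega
      · simp only [hj, if_false] at hρj
        omega
    calc prefixSum (Fin.tail α) m ≤ prefixSum α m := prefixSum_tail_le hα m
      _ ≤ ∑ j, min (ρ j) m := hdom m (by omega)
      _ = ∑ j, min (ρ' j) m := sum_congr rfl fun j _ => hpt j

theorem exists_isFRCode_of_dominance {ι : Type*} [Fintype ι] [DecidableEq ι] :
    ∀ {n : ℕ} (α : Fin n → ℕ) (ρ : ι → ℕ), Antitone α →
    ∑ j, ρ j = ∑ i, α i → (∀ m ≤ n, prefixSum α m ≤ ∑ j, min (ρ j) m) →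
    ∃ U : Fin n → Finset ι, IsFRCode U α ρ
  | 0, α, ρ, _, hsum, _ => by
    have hρ : ∀ j, ρ j = 0 := by simpa using hsum
    exact ⟨Fin.elim0, fun i => i.elim0, fun j => by simp [hρ j]⟩
  | n + 1, α, ρ, hα, hsum, hdom => by
    have hpos_count : α 0 ≤ #{j | 0 < ρ j} := by
      have := hdom 1 (by omega)
      rw [prefixSum_succ, sum_min_one] at this
      simpa [prefixSum] using this
    obtain ⟨S, hcard, htop⟩ :=
      exists_card_eq_forall_le ρ (hpos_count.trans (card_le_univ _))
    have hpos := lt_of_mem_of_card_le htop (hcard ▸ hpos_count)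
    set ρ' : ι → ℕ := fun j => ρ j - if j ∈ S then 1 else 0
    have hρ : ∀ j, ρ j = (if j ∈ S then 1 else 0) + ρ' j := by
      intro j
      by_cases hj : j ∈ S
      · have := hpos j hj
        simp only [ρ', hj, if_true]
        omega
      · simp [ρ', hj]
    have hsum' : ∑ j, ρ' j = ∑ i, Fin.tail α i := by
      have hsplit : ∑ j, ρ j = #S + ∑ j, ρ' j := by
        rw [sum_congr rfl fun j _ => hρ j, sum_add_distrib]
        simp
      rw [hsplit, Fin.sum_univ_succ, ← hcard] at hsum
      simpa [Fin.tail] using hsum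
    obtain ⟨U, hU⟩ := exists_isFRCode_of_dominance (Fin.tail α) ρ'
      (hα.comp_monotone (Fin.strictMono_succ.monotone)) hsum'
      (prefixSum_tail_le_sum_min hα htop hcard hρ hdom)
    refine ⟨Fin.cons S U, ?_⟩
    simpa [hcard, Fin.cons_self_tail] using hU.cons S hρ

/-- Gale–Ryser type existence condition: if `α` is nonincreasing,
`∑ j, ρ j = ∑ i, α i`, and `∑ j, min (ρ j) m ≥ ∑_{i < m} α i` for all `m ≤ n`,
then there is an FR code with storage vector `α` and replication vector `ρ`. -/
theorem fr_exists_of_gale_ryser (n θ : ℕ) (α : Fin n → ℕ) (ρ : Fin θ → ℕ)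
    (hα : ∀ i i' : Fin n, i ≤ i' → α i' ≤ α i)
    (h1 : ∑ j, ρ j = ∑ i, α i)
    (h2 : ∀ m : ℕ, m ≤ n →
      ∑ i ∈ (Finset.univ.filter (fun i : Fin n => (i : ℕ) < m)), α i
        ≤ ∑ j, min (ρ j) m) :
    ∃ U : Fin n → Finset (Fin θ),
      (∀ i, (U i).card = α i) ∧
      (∀ j : Fin θ, (Finset.univ.filter (fun i => j ∈ U i)).card = ρ j) :=
  exists_isFRCode_of_dominance α ρ (fun i i' h => hα i i' h) h1 h2
end

section
/- Let U : Fin n → Finset (Fin θ) be a fractional repetition code, let α ≥ 1 with (U i).card ≤ α for every i, let 1 ≤ k ≤ n, and let M be the minimum of (S.biUnion U).card over all S : Finset (Fin n) with S.card = k; assume M ≥ 1. Then there exists a set S : Finset (Fin n) of failed nodes with S.card = n + 1 − ⌈M / α⌉ (ceiling division) such that the surviving nodes store fewer than M distinct packets, i.e. (Sᶜ.biUnion U).card < M. Consequently the minimum distance d_min of the code satisfies d_min ≤ n − ⌈M/α⌉ + 1. -/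
/-!
Any `⌈M/α⌉ - 1` nodes store at most `(⌈M/α⌉ - 1) α < M` packets, so failing all the
other `n + 1 - ⌈M/α⌉` nodes leaves fewer than `M` packets. Such a choice is possible
because `M ≤ nα`, as some `k` nodes store exactly `M` packets.
-/

open Finset

theorem Nat.ceilDiv_sub_one_mul_lt {a : ℕ} (b : ℕ) (ha : 0 < a) : (a ⌈/⌉ b - 1) * b < a := by
  rw [Nat.ceilDiv_eq_add_pred_div, Nat.sub_one_mul]
  have := Nat.div_mul_le_self (a + b - 1) b
  omega

theorem Finset.exists_card_eq_card_compl_biUnion_lt {ι β : Type*} [Fintype ι] [DecidableEq ι]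
    [DecidableEq β] (U : ι → Finset β) {α M : ℕ} (hcap : ∀ i, #(U i) ≤ α) (hM : 0 < M)
    (hMcap : M ≤ Fintype.card ι * α) :
    ∃ S : Finset ι, #S = Fintype.card ι + 1 - M ⌈/⌉ α ∧ #(Sᶜ.biUnion U) < M := by
  have hα : 0 < α := Nat.pos_of_mul_pos_left (hM.trans_le hMcap)
  have hq_pos : 0 < M ⌈/⌉ α := Nat.pos_of_ne_zero fun h => by
    have := (ceilDiv_le_iff_le_mul hα).1 h.le
    omega
  have hq_le : M ⌈/⌉ α ≤ Fintype.card ι := (ceilDiv_le_iff_le_mul hα).2 (by rwa [mul_comm])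
  obtain ⟨T, -, hT⟩ := exists_subset_card_eq (s := (univ : Finset ι)) (n := M ⌈/⌉ α - 1)
    (by rw [card_univ]; omega)
  refine ⟨Tᶜ, by rw [card_compl, hT]; omega, ?_⟩
  rw [compl_compl]
  calc #(T.biUnion U) ≤ #T * α := card_biUnion_le_card_mul T U α fun i _ => hcap i
    _ < M := hT ▸ Nat.ceilDiv_sub_one_mul_lt α hM

theorem fr_min_distance_singleton_bound_general (n θ α k M : ℕ)
    (U : Fin n → Finset (Fin θ))
    (hcap : ∀ i : Fin n, (U i).card ≤ α)
    (hM : IsLeast {m : ℕ | ∃ S : Finset (Fin n), S.card = k ∧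
      (S.biUnion U).card = m} M)
    (hM1 : 1 ≤ M) :
    (∃ S : Finset (Fin n), S.card = n + 1 - M ⌈/⌉ α ∧
        ((Sᶜ).biUnion U).card < M) ∧
      sInf {c : ℕ | ∃ S : Finset (Fin n), S.card = c ∧
          ((Sᶜ).biUnion U).card < M} ≤ n - M ⌈/⌉ α + 1 := by
  obtain ⟨⟨S, -, hS⟩, -⟩ := hM
  have hMcap : M ≤ Fintype.card (Fin n) * α :=
    hS ▸ (card_biUnion_le_card_mul S U α fun i _ => hcap i).trans
      (Nat.mul_le_mul_right α (card_le_univ S))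
  obtain ⟨F, hF, hlt⟩ := exists_card_eq_card_compl_biUnion_lt U hcap hM1 hMcap
  rw [Fintype.card_fin] at hF
  refine ⟨⟨F, hF, hlt⟩, le_trans (Nat.sInf_le ⟨F, rfl, hlt⟩) ?_⟩
  omega

/-- Singleton-like bound on the minimum distance of an FR code: if `M = M(k)`
is the file size (the minimum number of distinct packets stored on any `k`
nodes), then some set of `n + 1 - ⌈M/α⌉` failed nodes leaves the surviving
nodes with fewer than `M` distinct packets; consequently
`d_min ≤ n - ⌈M/α⌉ + 1`. -/
theorem fr_min_distance_singleton_bound (n θ α k M : ℕ)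
    (U : Fin n → Finset (Fin θ))
    (hα : 1 ≤ α) (hcap : ∀ i : Fin n, (U i).card ≤ α)
    (hk1 : 1 ≤ k) (hkn : k ≤ n)
    (hM : IsLeast {m : ℕ | ∃ S : Finset (Fin n), S.card = k ∧
      (S.biUnion U).card = m} M)
    (hM1 : 1 ≤ M) :
    (∃ S : Finset (Fin n), S.card = n + 1 - M ⌈/⌉ α ∧
        ((Sᶜ).biUnion U).card < M) ∧
      sInf {c : ℕ | ∃ S : Finset (Fin n), S.card = c ∧
          ((Sᶜ).biUnion U).card < M} ≤ n - M ⌈/⌉ α + 1 :=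
  fr_min_distance_singleton_bound_general n θ α k M U hcap hM hM1
end
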